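/- arXiv:1402.4173 — 2 statements merged into one kernel-verified Lean document; each statement's English description precedes it below -/
import Mathlib

section
/- Every positive global solution ψ of ψ'' + 2ψ' + ψ = 1/ψ on [0,∞) with bounded energy G(0) < ∞ satisfies: there exist constants 0 < a ≤ b and C such that a ≤ ψ(t) ≤ b and |ψ'(t)| ≤ C for all t ≥ 0, and ∫₀^∞ ψ'(s)² ds ≤ G(0)/2 < ∞. -/
open MeasureTheory

/-- The Lyapunov functional `G = (1/2)ψ'² + (1/2)ψ² − log ψ − 1/2`. -/
noncomputable def lyapG (ψ ψ' : ℝ → ℝ) (t : ℝ) : ℝ :=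
  1 / 2 * ψ' t ^ 2 + 1 / 2 * ψ t ^ 2 - Real.log (ψ t) - 1 / 2

/-!
Along a positive solution the Lyapunov functional `G` satisfies `G' = -2ψ'²`, so
`∫₀ᵀ 2ψ'² = G(0) - G(T)`. Since `log x ≤ x - 1`, `G ≥ ψ'²/2 + (ψ - 1)²/2 ≥ 0`, which bounds
`ψ'`, `ψ` from above and `∫₀ᵀ ψ'²` by `G(0)/2`; the lower bound on `ψ` comes from
`G ≥ -log ψ - 1/2`.
-/

open Set Filter

theorem integrableOn_Ioi_and_integral_le_of_intervalIntegral_le {f : ℝ → ℝ}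
    {a C : ℝ} (hfi : ∀ T, IntegrableOn f (Ioc a T)) (hf : ∀ x ∈ Ici a, 0 ≤ f x)
    (hC : ∀ T, a ≤ T → ∫ x in a..T, f x ≤ C) :
    IntegrableOn f (Ioi a) ∧ ∫ x in Ioi a, f x ≤ C := by
  have hint : IntegrableOn f (Ioi a) := by
    refine integrableOn_Ioi_of_intervalIntegral_norm_bounded C a hfi tendsto_id ?_
    filter_upwards [eventually_ge_atTop a] with T hT
    calc ∫ x in a..T, ‖f x‖ = ∫ x in a..T, f x := by
          refine intervalIntegral.integral_congr fun x hx => Real.norm_of_nonneg (hf x ?_)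
          rw [uIcc_of_le hT] at hx
          exact hx.1
      _ ≤ C := hC T hT
  refine ⟨hint, le_of_tendsto (intervalIntegral_tendsto_integral_Ioi a hint tendsto_id) ?_⟩
  filter_upwards [eventually_ge_atTop a] with T hT using hC T hT

section Lyapunov

variable {ψ ψ' ψ'' : ℝ → ℝ}

theorem hasDerivWithinAt_lyapG_of_ode {s : Set ℝ} {t : ℝ}
    (hψ : HasDerivWithinAt ψ (ψ' t) s t)
    (hψ' : HasDerivWithinAt ψ' (ψ'' t) s t)
    (hne : ψ t ≠ 0)
    (hODE : ψ'' t + 2 * ψ' t + ψ t = 1 / ψ t) :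
    HasDerivWithinAt (lyapG ψ ψ') (-(2 * ψ' t ^ 2)) s t := by
  have H : HasDerivWithinAt (lyapG ψ ψ')
      (1 / 2 * (2 * ψ' t ^ 1 * ψ'' t) + 1 / 2 * (2 * ψ t ^ 1 * ψ' t) - ψ' t / ψ t) s t :=
    ((((hψ'.pow 2).const_mul _).add ((hψ.pow 2).const_mul _)).sub (hψ.log hne)).sub_const _
  convert H using 1
  rw [show ψ'' t = 1 / ψ t - ψ t - 2 * ψ' t by linarith]
  field_simp
  ring

theorem neg_log_sub_half_le_lyapG (t : ℝ) : -Real.log (ψ t) - 1 / 2 ≤ lyapG ψ ψ' t := by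
  unfold lyapG
  nlinarith [sq_nonneg (ψ' t), sq_nonneg (ψ t)]

theorem half_sq_add_half_sq_sub_one_le_lyapG {t : ℝ} (hpos : 0 < ψ t) :
    1 / 2 * ψ' t ^ 2 + 1 / 2 * (ψ t - 1) ^ 2 ≤ lyapG ψ ψ' t := by
  unfold lyapG
  linarith [Real.log_le_sub_one_of_pos hpos]

theorem lyapG_nonneg {t : ℝ} (hpos : 0 < ψ t) : 0 ≤ lyapG ψ ψ' t := by
  nlinarith [half_sq_add_half_sq_sub_one_le_lyapG (ψ' := ψ') hpos]

theorem exp_neg_le_of_lyapG_le {t G : ℝ} (hpos : 0 < ψ t) (hG : lyapG ψ ψ' t ≤ G) :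
    Real.exp (-(G + 1 / 2)) ≤ ψ t := by
  rw [← Real.le_log_iff_exp_le hpos]
  linarith [neg_log_sub_half_le_lyapG (ψ := ψ) (ψ' := ψ') t]

theorem le_one_add_sqrt_of_lyapG_le {t G : ℝ} (hpos : 0 < ψ t) (hG : lyapG ψ ψ' t ≤ G) :
    ψ t ≤ 1 + √(2 * G) := by
  have h := half_sq_add_half_sq_sub_one_le_lyapG (ψ' := ψ') hpos
  have : |ψ t - 1| ≤ √(2 * G) := Real.abs_le_sqrt (by nlinarith [sq_nonneg (ψ' t)])
  linarith [le_abs_self (ψ t - 1)]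

theorem abs_le_sqrt_of_lyapG_le {t G : ℝ} (hpos : 0 < ψ t) (hG : lyapG ψ ψ' t ≤ G) :
    |ψ' t| ≤ √(2 * G) := by
  have h := half_sq_add_half_sq_sub_one_le_lyapG (ψ' := ψ') hpos
  exact Real.abs_le_sqrt (by nlinarith [sq_nonneg (ψ t - 1)])

end Lyapunov

structure IsPositiveSolution (ψ ψ' ψ'' : ℝ → ℝ) : Prop where
  pos : ∀ t ∈ Ici (0 : ℝ), 0 < ψ t
  hasDerivWithinAt : ∀ t ∈ Ici (0 : ℝ), HasDerivWithinAt ψ (ψ' t) (Ici 0) t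
  hasDerivWithinAt_deriv : ∀ t ∈ Ici (0 : ℝ), HasDerivWithinAt ψ' (ψ'' t) (Ici 0) t
  ode : ∀ t ∈ Ici (0 : ℝ), ψ'' t + 2 * ψ' t + ψ t = 1 / ψ t

namespace IsPositiveSolution

variable {ψ ψ' ψ'' : ℝ → ℝ}

theorem continuousOn_deriv (h : IsPositiveSolution ψ ψ' ψ'') : ContinuousOn ψ' (Ici 0) :=
  fun t ht => (h.hasDerivWithinAt_deriv t ht).continuousWithinAt

theorem integrableOn_sq_deriv_Ioc (h : IsPositiveSolution ψ ψ' ψ'') (T : ℝ) :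
    IntegrableOn (fun s => ψ' s ^ 2) (Ioc 0 T) :=
  ((h.continuousOn_deriv.mono Icc_subset_Ici_self).pow 2).integrableOn_Icc.mono_set
    Ioc_subset_Icc_self

theorem hasDerivWithinAt_lyapG (h : IsPositiveSolution ψ ψ' ψ'') {t : ℝ}
    (ht : t ∈ Ici (0 : ℝ)) :
    HasDerivWithinAt (lyapG ψ ψ') (-(2 * ψ' t ^ 2)) (Ici 0) t :=
  hasDerivWithinAt_lyapG_of_ode (h.hasDerivWithinAt t ht) (h.hasDerivWithinAt_deriv t ht)
    (h.pos t ht).ne' (h.ode t ht)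

theorem integral_two_mul_sq_deriv (h : IsPositiveSolution ψ ψ' ψ'') {T : ℝ} (hT : 0 ≤ T) :
    ∫ s in (0 : ℝ)..T, 2 * ψ' s ^ 2 = lyapG ψ ψ' 0 - lyapG ψ ψ' T := by
  have hcont : ContinuousOn (fun s => -(2 * ψ' s ^ 2)) (uIcc 0 T) := by
    rw [uIcc_of_le hT]
    exact (continuousOn_const.mul ((h.continuousOn_deriv.mono Icc_subset_Ici_self).pow 2)).neg
  have hftc := intervalIntegral.integral_eq_sub_of_hasDeriv_right_of_le hT
    (fun t ht => (h.hasDerivWithinAt_lyapG (Icc_subset_Ici_self ht)).continuousWithinAt.mono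
      Icc_subset_Ici_self)
    (fun t ht => (h.hasDerivWithinAt_lyapG ht.1.le).mono (Ioi_subset_Ici ht.1.le))
    hcont.intervalIntegrable
  rw [intervalIntegral.integral_neg] at hftc
  linarith

theorem lyapG_le_lyapG_zero (h : IsPositiveSolution ψ ψ' ψ'') {t : ℝ}
    (ht : t ∈ Ici (0 : ℝ)) :
    lyapG ψ ψ' t ≤ lyapG ψ ψ' 0 := by
  have := h.integral_two_mul_sq_deriv ht
  have : 0 ≤ ∫ s in (0 : ℝ)..t, 2 * ψ' s ^ 2 :=
    intervalIntegral.integral_nonneg ht fun s _ => by positivity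
  linarith

theorem intervalIntegral_sq_deriv_le (h : IsPositiveSolution ψ ψ' ψ'') {T : ℝ} (hT : 0 ≤ T) :
    ∫ s in (0 : ℝ)..T, ψ' s ^ 2 ≤ lyapG ψ ψ' 0 / 2 := by
  have := h.integral_two_mul_sq_deriv hT
  rw [intervalIntegral.integral_const_mul] at this
  linarith [lyapG_nonneg (ψ' := ψ') (h.pos T hT)]

end IsPositiveSolution

/-- Every positive global solution `ψ` of `ψ'' + 2ψ' + ψ = 1/ψ` on `[0,∞)` satisfies
uniform bounds `0 < a ≤ ψ ≤ b`, `|ψ'| ≤ C`, and `∫₀^∞ ψ'(s)² ds ≤ G(0)/2 < ∞`. -/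
theorem global_solution_uniform_bounds (ψ ψ' ψ'' : ℝ → ℝ)
    (hpos : ∀ t ∈ Set.Ici (0 : ℝ), 0 < ψ t)
    (hd1 : ∀ t ∈ Set.Ici (0 : ℝ), HasDerivWithinAt ψ (ψ' t) (Set.Ici 0) t)
    (hd2 : ∀ t ∈ Set.Ici (0 : ℝ), HasDerivWithinAt ψ' (ψ'' t) (Set.Ici 0) t)
    (hODE : ∀ t ∈ Set.Ici (0 : ℝ), ψ'' t + 2 * ψ' t + ψ t = 1 / ψ t) :
    ∃ a b C : ℝ, 0 < a ∧ a ≤ b ∧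
      (∀ t ∈ Set.Ici (0 : ℝ), a ≤ ψ t ∧ ψ t ≤ b ∧ |ψ' t| ≤ C) ∧
      IntegrableOn (fun s => ψ' s ^ 2) (Set.Ioi (0 : ℝ)) ∧
      ∫ s in Set.Ioi (0 : ℝ), ψ' s ^ 2 ≤ lyapG ψ ψ' 0 / 2 := by
  have h : IsPositiveSolution ψ ψ' ψ'' := ⟨hpos, hd1, hd2, hODE⟩
  set G₀ := lyapG ψ ψ' 0
  have hG : ∀ t ∈ Ici (0 : ℝ), lyapG ψ ψ' t ≤ G₀ := fun t ht => h.lyapG_le_lyapG_zero ht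
  have h₀ : (0 : ℝ) ∈ Ici 0 := self_mem_Ici
  refine ⟨Real.exp (-(G₀ + 1 / 2)), 1 + √(2 * G₀), √(2 * G₀), Real.exp_pos _,
    (exp_neg_le_of_lyapG_le (hpos 0 h₀) (hG 0 h₀)).trans
      (le_one_add_sqrt_of_lyapG_le (hpos 0 h₀) (hG 0 h₀)),
    fun t ht => ⟨exp_neg_le_of_lyapG_le (hpos t ht) (hG t ht),
      le_one_add_sqrt_of_lyapG_le (hpos t ht) (hG t ht),
      abs_le_sqrt_of_lyapG_le (hpos t ht) (hG t ht)⟩, ?_⟩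
  exact integrableOn_Ioi_and_integral_le_of_intervalIntegral_le h.integrableOn_sq_deriv_Ioc
    (fun s _ => sq_nonneg _) fun T hT => h.intervalIntegral_sq_deriv_le hT
end

section
/- (Weighted convolution estimate) Let γ, β < 2 with γ + β > 2, and let f: ℝ² → ℝ be measurable with |f(y)| ≤ M(1+|y|)^{−γ} for all y. Then there is a constant C = C(γ,β) such that for all x ∈ ℝ², |∫_{ℝ²} f(y)/|x−y|^β dy| ≤ C·M·(1+|x|)^{2−β−γ}. -/
/-!
Put `R = 1 + ‖x‖` and split the space (of dimension `d`) into the ball of radius `R / 2` about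
`x`, where the weight `(1 + ‖y‖)^(-γ)` is at most `(R / 2)^(-γ)`; the rest of the ball of radius
`2 R` about `0`, where `dist x y ≥ R / 2`; and the exterior of that ball, where
`dist x y ≥ ‖y‖ / 2`. On each piece the integrand is dominated by a constant times a single power
`‖y‖^(-p)` or `dist x y^(-p)`. By the dilation invariance of Haar measure, the integral of
`‖y‖^(-p)` over a ball of radius `r` (for `p < d`) or over its exterior (for `p > d`) is
`r^(d-p)` times its value at `r = 1`, so each piece contributes a constant times `R^(d-β-γ)`.
-/

open MeasureTheory Metric Set Module ENNReal

theorem lintegral_ofReal_le_ofReal_mul_of_ae_le {α : Type*} [MeasurableSpace α] {ν : Measure α}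
    {f g : α → ℝ} {c : ℝ} (hc : 0 ≤ c) (h : ∀ᵐ a ∂ν, f a ≤ c * g a) :
    ∫⁻ a, ENNReal.ofReal (f a) ∂ν ≤ ENNReal.ofReal c * ∫⁻ a, ENNReal.ofReal (g a) ∂ν := by
  rw [← lintegral_const_mul' _ _ ofReal_ne_top]
  refine lintegral_mono_ae (h.mono fun a ha => ?_)
  rw [← ENNReal.ofReal_mul hc]
  exact ENNReal.ofReal_le_ofReal ha

theorem preimage_smul_ball_zero {E : Type*} [NormedAddCommGroup E] [NormedSpace ℝ E] {r : ℝ}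
    (hr : 0 < r) : (r • · : E → E) ⁻¹' ball 0 r = ball 0 1 := by
  ext z
  simp [norm_smul, abs_of_pos hr, hr]

variable {E : Type*} [NormedAddCommGroup E] [NormedSpace ℝ E] [FiniteDimensional ℝ E]
  [MeasurableSpace E] [BorelSpace E] (μ : Measure E) [μ.IsAddHaarMeasure]

theorem setLIntegral_norm_rpow_neg_eq_preimage_smul {r : ℝ} (hr : 0 < r) (p : ℝ) (s : Set E) :
    ∫⁻ y in s, ENNReal.ofReal (‖y‖ ^ (-p)) ∂μ =
      ENNReal.ofReal (r ^ (finrank ℝ E - p)) *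
        ∫⁻ z in (r • ·) ⁻¹' s, ENNReal.ofReal (‖z‖ ^ (-p)) ∂μ := by
  have hmap : MeasurePreserving (r • · : E → E) μ (.map (r • ·) μ) :=
    ⟨measurable_const_smul r, rfl⟩
  have hnorm (z : E) : ENNReal.ofReal (‖z‖ ^ (-p)) =
      ENNReal.ofReal (r ^ p) * ENNReal.ofReal (‖r • z‖ ^ (-p)) := by
    rw [← ENNReal.ofReal_mul (by positivity), norm_smul, Real.norm_of_nonneg hr.le,
      Real.mul_rpow hr.le (norm_nonneg z), ← mul_assoc, ← Real.rpow_add hr, add_neg_cancel,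
      Real.rpow_zero, one_mul]
  conv_rhs => rw [lintegral_congr fun z => hnorm z]
  rw [lintegral_const_mul' _ _ ofReal_ne_top,
    hmap.setLIntegral_comp_preimage_emb (measurableEmbedding_const_smul₀ hr.ne')
      (fun y => ENNReal.ofReal (‖y‖ ^ (-p))) s,
    Measure.map_addHaar_smul μ hr.ne', Measure.restrict_smul, lintegral_smul_measure,
    smul_eq_mul, ← mul_assoc, ← mul_assoc, ← ENNReal.ofReal_mul (by positivity),
    ← ENNReal.ofReal_mul (by positivity), abs_of_pos (by positivity), ← Real.rpow_add hr,
    sub_add_cancel, Real.rpow_natCast, mul_inv_cancel₀ (by positivity), ENNReal.ofReal_one,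
    one_mul]

theorem setLIntegral_ball_zero_norm_rpow_neg {r : ℝ} (hr : 0 < r) (p : ℝ) :
    ∫⁻ y in ball 0 r, ENNReal.ofReal (‖y‖ ^ (-p)) ∂μ =
      ENNReal.ofReal (r ^ (finrank ℝ E - p)) *
        ∫⁻ y in ball 0 1, ENNReal.ofReal (‖y‖ ^ (-p)) ∂μ := by
  rw [setLIntegral_norm_rpow_neg_eq_preimage_smul μ hr, preimage_smul_ball_zero hr]

theorem setLIntegral_compl_ball_zero_norm_rpow_neg {r : ℝ} (hr : 0 < r) (p : ℝ) :
    ∫⁻ y in (ball 0 r)ᶜ, ENNReal.ofReal (‖y‖ ^ (-p)) ∂μ =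
      ENNReal.ofReal (r ^ (finrank ℝ E - p)) *
        ∫⁻ y in (ball 0 1)ᶜ, ENNReal.ofReal (‖y‖ ^ (-p)) ∂μ := by
  rw [setLIntegral_norm_rpow_neg_eq_preimage_smul μ hr, preimage_compl,
    preimage_smul_ball_zero hr]

theorem setLIntegral_ball_dist_rpow_neg (x : E) {r : ℝ} (hr : 0 < r) (p : ℝ) :
    ∫⁻ y in ball x r, ENNReal.ofReal (dist x y ^ (-p)) ∂μ =
      ENNReal.ofReal (r ^ (finrank ℝ E - p)) *
        ∫⁻ y in ball 0 1, ENNReal.ofReal (‖y‖ ^ (-p)) ∂μ := by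
  have hball : (· - x) ⁻¹' ball 0 r = ball x r := by
    ext y
    simp [dist_eq_norm]
  calc ∫⁻ y in ball x r, ENNReal.ofReal (dist x y ^ (-p)) ∂μ
      = ∫⁻ y in (· - x) ⁻¹' ball 0 r, ENNReal.ofReal (‖y - x‖ ^ (-p)) ∂μ := by
        simp_rw [hball, dist_eq_norm']
    _ = ∫⁻ y in ball 0 r, ENNReal.ofReal (‖y‖ ^ (-p)) ∂μ :=
        (measurePreserving_sub_right μ x).setLIntegral_comp_preimage_emb
          (MeasurableEquiv.subRight x).measurableEmbedding (fun z => ENNReal.ofReal (‖z‖ ^ (-p))) _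
    _ = _ := setLIntegral_ball_zero_norm_rpow_neg μ hr p

theorem setLIntegral_unitBall_norm_rpow_neg_lt_top (hd : 1 ≤ finrank ℝ E) {p : ℝ}
    (hp : p < finrank ℝ E) :
    ∫⁻ y in ball (0 : E) 1, ENNReal.ofReal (‖y‖ ^ (-p)) ∂μ < ∞ := by
  refine Integrable.lintegral_lt_top (integrableOn_ball_of_norm_le_rpow (C := 1) hd hp
    (ae_of_all _ fun y => ?_) (measurable_norm.pow_const _).aestronglyMeasurable)
  rw [Real.norm_of_nonneg (by positivity), one_mul]

theorem setLIntegral_compl_unitBall_norm_rpow_neg_lt_top {p : ℝ} (hp : finrank ℝ E < p) :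
    ∫⁻ y in (ball (0 : E) 1)ᶜ, ENNReal.ofReal (‖y‖ ^ (-p)) ∂μ < ∞ := by
  have hp0 : 0 ≤ p := le_trans (Nat.cast_nonneg _) hp.le
  have hle : ∀ y ∈ (ball (0 : E) 1)ᶜ, ‖y‖ ^ (-p) ≤ 2 ^ p * (1 + ‖y‖) ^ (-p) := by
    intro y hy
    have hy1 : 1 ≤ ‖y‖ := by simpa using hy
    calc ‖y‖ ^ (-p) = 2 ^ p * (2 * ‖y‖) ^ (-p) := by
          rw [Real.mul_rpow zero_le_two (norm_nonneg y), ← mul_assoc, ← Real.rpow_add two_pos,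
            add_neg_cancel, Real.rpow_zero, one_mul]
      _ ≤ 2 ^ p * (1 + ‖y‖) ^ (-p) := by
          refine mul_le_mul_of_nonneg_left ?_ (by positivity)
          exact Real.rpow_le_rpow_of_nonpos (by positivity) (by linarith) (by linarith)
  calc ∫⁻ y in (ball (0 : E) 1)ᶜ, ENNReal.ofReal (‖y‖ ^ (-p)) ∂μ
      ≤ ENNReal.ofReal (2 ^ p) * ∫⁻ y in (ball (0 : E) 1)ᶜ, ENNReal.ofReal ((1 + ‖y‖) ^ (-p)) ∂μ :=
        lintegral_ofReal_le_ofReal_mul_of_ae_le (by positivity)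
          (ae_restrict_of_forall_mem measurableSet_ball.compl hle)
    _ ≤ ENNReal.ofReal (2 ^ p) * ∫⁻ y, ENNReal.ofReal ((1 + ‖y‖) ^ (-p)) ∂μ := by
        gcongr
        exact Measure.restrict_le_self
    _ < ∞ := mul_lt_top ofReal_lt_top (finite_integral_one_add_norm hp)

section Regions

variable {μ} {β γ : ℝ} (x : E)

theorem setLIntegral_ball_one_add_norm_rpow_mul_dist_rpow_le (hγ : 0 ≤ γ) :
    ∫⁻ y in ball x ((1 + ‖x‖) / 2), ENNReal.ofReal ((1 + ‖y‖) ^ (-γ) * dist x y ^ (-β)) ∂μ ≤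
      ENNReal.ofReal (2 ^ (β + γ - finrank ℝ E)) *
        (∫⁻ y in ball 0 1, ENNReal.ofReal (‖y‖ ^ (-β)) ∂μ) *
          ENNReal.ofReal ((1 + ‖x‖) ^ (finrank ℝ E - β - γ)) := by
  set R := 1 + ‖x‖ with hR_def
  have hR : 0 < R := by positivity
  have hle : ∀ y ∈ ball x (R / 2),
      (1 + ‖y‖) ^ (-γ) * dist x y ^ (-β) ≤ (R / 2) ^ (-γ) * dist x y ^ (-β) := by
    intro y hy
    have : R / 2 ≤ 1 + ‖y‖ := by
      have := norm_sub_norm_le x y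
      rw [mem_ball, dist_comm, dist_eq_norm] at hy
      linarith
    exact mul_le_mul_of_nonneg_right (Real.rpow_le_rpow_of_nonpos (by positivity) this
      (by linarith)) (by positivity)
  have hpow : (R / 2) ^ (-γ) * (R / 2) ^ (finrank ℝ E - β) =
      2 ^ (β + γ - finrank ℝ E) * R ^ (finrank ℝ E - β - γ) := by
    simp only [Real.rpow_def_of_pos, hR, two_pos, div_pos, ← Real.exp_add,
      Real.log_div hR.ne' two_ne_zero]
    ring_nf
  calc _ ≤ ENNReal.ofReal ((R / 2) ^ (-γ)) *
        ∫⁻ y in ball x (R / 2), ENNReal.ofReal (dist x y ^ (-β)) ∂μ :=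
        lintegral_ofReal_le_ofReal_mul_of_ae_le (by positivity)
          (ae_restrict_of_forall_mem measurableSet_ball hle)
    _ = ENNReal.ofReal ((R / 2) ^ (-γ) * (R / 2) ^ (finrank ℝ E - β)) *
        ∫⁻ y in ball 0 1, ENNReal.ofReal (‖y‖ ^ (-β)) ∂μ := by
        rw [setLIntegral_ball_dist_rpow_neg μ x (by positivity), ← mul_assoc,
          ENNReal.ofReal_mul (by positivity)]
    _ = _ := by
        rw [hpow, ENNReal.ofReal_mul (by positivity)]
        ring

theorem setLIntegral_ball_diff_ball_one_add_norm_rpow_mul_dist_rpow_le [Nontrivial E]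
    (hβ : 0 ≤ β) (hγ : 0 ≤ γ) :
    ∫⁻ y in ball 0 (2 * (1 + ‖x‖)) \ ball x ((1 + ‖x‖) / 2),
        ENNReal.ofReal ((1 + ‖y‖) ^ (-γ) * dist x y ^ (-β)) ∂μ ≤
      ENNReal.ofReal (2 ^ (β + finrank ℝ E - γ)) *
        (∫⁻ y in ball 0 1, ENNReal.ofReal (‖y‖ ^ (-γ)) ∂μ) *
          ENNReal.ofReal ((1 + ‖x‖) ^ (finrank ℝ E - β - γ)) := by
  set R := 1 + ‖x‖
  have hR : 0 < R := by positivity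
  have hle : ∀ᵐ y ∂μ.restrict (ball 0 (2 * R) \ ball x (R / 2)),
      (1 + ‖y‖) ^ (-γ) * dist x y ^ (-β) ≤ (R / 2) ^ (-β) * ‖y‖ ^ (-γ) := by
    -- only a.e.: at `y = 0` the right side is the junk value `0 ^ (-γ) = 0`
    refine (ae_restrict_iff' (measurableSet_ball.diff measurableSet_ball)).2
      ((Measure.ae_ne μ 0).mono fun y hy0 hy => ?_)
    have hdist : R / 2 ≤ dist x y := by simpa [dist_comm] using hy.2
    rw [mul_comm]
    exact mul_le_mul (Real.rpow_le_rpow_of_nonpos (by positivity) hdist (by linarith))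
      (Real.rpow_le_rpow_of_nonpos (norm_pos_iff.2 hy0) (by linarith) (by linarith))
      (by positivity) (by positivity)
  have hpow : (R / 2) ^ (-β) * (2 * R) ^ (finrank ℝ E - γ) =
      2 ^ (β + finrank ℝ E - γ) * R ^ (finrank ℝ E - β - γ) := by
    simp only [Real.rpow_def_of_pos, hR, two_pos, div_pos, mul_pos two_pos hR, ← Real.exp_add,
      Real.log_div hR.ne' two_ne_zero, Real.log_mul two_ne_zero hR.ne']
    ring_nf
  calc _ ≤ ENNReal.ofReal ((R / 2) ^ (-β)) *
        ∫⁻ y in ball 0 (2 * R) \ ball x (R / 2), ENNReal.ofReal (‖y‖ ^ (-γ)) ∂μ :=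
        lintegral_ofReal_le_ofReal_mul_of_ae_le (by positivity) hle
    _ ≤ ENNReal.ofReal ((R / 2) ^ (-β)) *
        ∫⁻ y in ball 0 (2 * R), ENNReal.ofReal (‖y‖ ^ (-γ)) ∂μ := by
        gcongr
        exact sdiff_subset
    _ = ENNReal.ofReal ((R / 2) ^ (-β) * (2 * R) ^ (finrank ℝ E - γ)) *
        ∫⁻ y in ball 0 1, ENNReal.ofReal (‖y‖ ^ (-γ)) ∂μ := by
        rw [setLIntegral_ball_zero_norm_rpow_neg μ (by positivity), ← mul_assoc,
          ENNReal.ofReal_mul (by positivity)]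
    _ = _ := by
        rw [hpow, ENNReal.ofReal_mul (by positivity)]
        ring

theorem setLIntegral_compl_ball_one_add_norm_rpow_mul_dist_rpow_le (hβ : 0 ≤ β) (hγ : 0 ≤ γ) :
    ∫⁻ y in (ball 0 (2 * (1 + ‖x‖)))ᶜ, ENNReal.ofReal ((1 + ‖y‖) ^ (-γ) * dist x y ^ (-β)) ∂μ ≤
      ENNReal.ofReal (2 ^ (finrank ℝ E - γ)) *
        (∫⁻ y in (ball 0 1)ᶜ, ENNReal.ofReal (‖y‖ ^ (-(β + γ))) ∂μ) *
          ENNReal.ofReal ((1 + ‖x‖) ^ (finrank ℝ E - β - γ)) := by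
  set R := 1 + ‖x‖
  have hR : 0 < R := by positivity
  have hle : ∀ y ∈ (ball 0 (2 * R))ᶜ,
      (1 + ‖y‖) ^ (-γ) * dist x y ^ (-β) ≤ 2 ^ β * ‖y‖ ^ (-(β + γ)) := by
    intro y hy
    have hy2 : 2 * R ≤ ‖y‖ := by simpa using hy
    have hdist : ‖y‖ / 2 ≤ dist x y := by
      have := norm_sub_norm_le y x
      rw [dist_comm, dist_eq_norm]
      linarith
    have hy0 : 0 < ‖y‖ := by linarith
    calc (1 + ‖y‖) ^ (-γ) * dist x y ^ (-β) ≤ ‖y‖ ^ (-γ) * (‖y‖ / 2) ^ (-β) :=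
          mul_le_mul (Real.rpow_le_rpow_of_nonpos hy0 (by linarith) (by linarith))
            (Real.rpow_le_rpow_of_nonpos (by positivity) hdist (by linarith))
            (by positivity) (by positivity)
      _ = 2 ^ β * ‖y‖ ^ (-(β + γ)) := by
          simp only [Real.rpow_def_of_pos, hy0, two_pos, div_pos, ← Real.exp_add,
            Real.log_div hy0.ne' two_ne_zero]
          ring_nf
  have hpow : 2 ^ β * (2 * R) ^ (finrank ℝ E - (β + γ)) =
      2 ^ (finrank ℝ E - γ) * R ^ (finrank ℝ E - β - γ) := by
    simp only [Real.rpow_def_of_pos, hR, two_pos, mul_pos two_pos hR, ← Real.exp_add,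
      Real.log_mul two_ne_zero hR.ne']
    ring_nf
  calc _ ≤ ENNReal.ofReal (2 ^ β) *
        ∫⁻ y in (ball 0 (2 * R))ᶜ, ENNReal.ofReal (‖y‖ ^ (-(β + γ))) ∂μ :=
        lintegral_ofReal_le_ofReal_mul_of_ae_le (by positivity)
          (ae_restrict_of_forall_mem measurableSet_ball.compl hle)
    _ = ENNReal.ofReal (2 ^ β * (2 * R) ^ (finrank ℝ E - (β + γ))) *
        ∫⁻ y in (ball 0 1)ᶜ, ENNReal.ofReal (‖y‖ ^ (-(β + γ))) ∂μ := by
        rw [setLIntegral_compl_ball_zero_norm_rpow_neg μ (by positivity), ← mul_assoc,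
          ENNReal.ofReal_mul (by positivity)]
    _ = _ := by
        rw [hpow, ENNReal.ofReal_mul (by positivity)]
        ring

end Regions

theorem exists_lintegral_one_add_norm_rpow_mul_dist_rpow_le {β γ : ℝ} (hβ : β < finrank ℝ E)
    (hγ : γ < finrank ℝ E) (hβγ : finrank ℝ E < β + γ) :
    ∃ C : NNReal, ∀ x : E, ∫⁻ y, ENNReal.ofReal ((1 + ‖y‖) ^ (-γ) * dist x y ^ (-β)) ∂μ ≤
      C * ENNReal.ofReal ((1 + ‖x‖) ^ (finrank ℝ E - β - γ)) := by
  have hβ0 : 0 ≤ β := by linarith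
  have hγ0 : 0 ≤ γ := by linarith
  have hd : 0 < finrank ℝ E := by exact_mod_cast (by linarith : (0 : ℝ) < finrank ℝ E)
  have : Nontrivial E := Module.nontrivial_of_finrank_pos hd
  set K := ENNReal.ofReal (2 ^ (β + γ - finrank ℝ E)) *
      (∫⁻ y in ball 0 1, ENNReal.ofReal (‖y‖ ^ (-β)) ∂μ) +
    ENNReal.ofReal (2 ^ (β + finrank ℝ E - γ)) *
      (∫⁻ y in ball 0 1, ENNReal.ofReal (‖y‖ ^ (-γ)) ∂μ) +
    ENNReal.ofReal (2 ^ (finrank ℝ E - γ)) *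
      ∫⁻ y in (ball 0 1)ᶜ, ENNReal.ofReal (‖y‖ ^ (-(β + γ))) ∂μ
  have hK : K ≠ ∞ := by
    have := setLIntegral_unitBall_norm_rpow_neg_lt_top μ hd hβ
    have := setLIntegral_unitBall_norm_rpow_neg_lt_top μ hd hγ
    have := setLIntegral_compl_unitBall_norm_rpow_neg_lt_top μ hβγ
    finiteness
  refine ⟨K.toNNReal, fun x => ?_⟩
  set A := ball x ((1 + ‖x‖) / 2)
  set B := ball (0 : E) (2 * (1 + ‖x‖))
  have hcover : univ ⊆ A ∪ (B \ A) ∪ Bᶜ := fun y _ => by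
    by_cases hA : y ∈ A <;> by_cases hB : y ∈ B <;> simp [hA, hB]
  calc ∫⁻ y, ENNReal.ofReal ((1 + ‖y‖) ^ (-γ) * dist x y ^ (-β)) ∂μ
      ≤ ∫⁻ y in A ∪ (B \ A) ∪ Bᶜ, ENNReal.ofReal ((1 + ‖y‖) ^ (-γ) * dist x y ^ (-β)) ∂μ := by
        rw [← setLIntegral_univ]; exact lintegral_mono_set hcover
    _ ≤ (∫⁻ y in A, ENNReal.ofReal ((1 + ‖y‖) ^ (-γ) * dist x y ^ (-β)) ∂μ) +
        (∫⁻ y in B \ A, ENNReal.ofReal ((1 + ‖y‖) ^ (-γ) * dist x y ^ (-β)) ∂μ) +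
        ∫⁻ y in Bᶜ, ENNReal.ofReal ((1 + ‖y‖) ^ (-γ) * dist x y ^ (-β)) ∂μ :=
        (lintegral_union_le _ _ _).trans (add_le_add_left (lintegral_union_le _ _ _) _)
    _ ≤ K * ENNReal.ofReal ((1 + ‖x‖) ^ (finrank ℝ E - β - γ)) := by
        grw [setLIntegral_ball_one_add_norm_rpow_mul_dist_rpow_le x hγ0,
          setLIntegral_ball_diff_ball_one_add_norm_rpow_mul_dist_rpow_le x hβ0 hγ0,
          setLIntegral_compl_ball_one_add_norm_rpow_mul_dist_rpow_le x hβ0 hγ0]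
        simp only [K, add_mul, le_refl]
    _ = _ := by rw [ENNReal.coe_toNNReal hK]

theorem exists_abs_integral_div_dist_rpow_le {β γ : ℝ} (hβ : β < finrank ℝ E)
    (hγ : γ < finrank ℝ E) (hβγ : finrank ℝ E < β + γ) :
    ∃ C : ℝ, ∀ (M : ℝ) (f : E → ℝ), (∀ y, |f y| ≤ M * (1 + ‖y‖) ^ (-γ)) → ∀ x : E,
      |∫ y, f y / dist x y ^ β ∂μ| ≤ C * M * (1 + ‖x‖) ^ (finrank ℝ E - β - γ) := by
  obtain ⟨C, hC⟩ := exists_lintegral_one_add_norm_rpow_mul_dist_rpow_le μ hβ hγ hβγ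
  refine ⟨C, fun M f hf x => ?_⟩
  have hM : 0 ≤ M := by simpa using (abs_nonneg _).trans (hf 0)
  have hpt (y : E) : ‖f y / dist x y ^ β‖ ≤ M * ((1 + ‖y‖) ^ (-γ) * dist x y ^ (-β)) := by
    rw [Real.norm_eq_abs, abs_div, abs_of_nonneg (Real.rpow_nonneg dist_nonneg β), div_eq_mul_inv,
      ← Real.rpow_neg dist_nonneg, ← mul_assoc]
    exact mul_le_mul_of_nonneg_right (hf y) (by positivity)
  rw [← Real.norm_eq_abs]
  refine (norm_integral_le_lintegral_norm _).trans
    (ENNReal.toReal_le_of_le_ofReal (by positivity) ?_)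
  calc ∫⁻ y, ENNReal.ofReal ‖f y / dist x y ^ β‖ ∂μ
      ≤ ENNReal.ofReal M * ∫⁻ y, ENNReal.ofReal ((1 + ‖y‖) ^ (-γ) * dist x y ^ (-β)) ∂μ :=
        lintegral_ofReal_le_ofReal_mul_of_ae_le hM (ae_of_all _ hpt)
    _ ≤ ENNReal.ofReal M * (C * ENNReal.ofReal ((1 + ‖x‖) ^ (finrank ℝ E - β - γ))) := by
        grw [hC x]
    _ = _ := by
        rw [ENNReal.ofReal_mul (by positivity), ENNReal.ofReal_mul (by positivity),
          ENNReal.ofReal_coe_nnreal]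
        ring

/-- Weighted convolution estimate in `ℝ²`: if `γ, β < 2`, `γ + β > 2` and
`|f(y)| ≤ M(1+|y|)^{−γ}`, then `|∫ f(y)/|x−y|^β dy| ≤ C·M·(1+|x|)^{2−β−γ}` with
`C = C(γ,β)`. -/
theorem weighted_convolution_estimate (γ β : ℝ) (hγ : γ < 2) (hβ : β < 2)
    (hγβ : 2 < γ + β) :
    ∃ C : ℝ, ∀ (M : ℝ) (f : EuclideanSpace ℝ (Fin 2) → ℝ), Measurable f →
      (∀ y, |f y| ≤ M * (1 + ‖y‖) ^ (-γ)) →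
      ∀ x : EuclideanSpace ℝ (Fin 2),
        |∫ y, f y / dist x y ^ β| ≤ C * M * (1 + ‖x‖) ^ (2 - β - γ) := by
  have hdim : (finrank ℝ (EuclideanSpace ℝ (Fin 2)) : ℝ) = 2 := by simp
  obtain ⟨C, hC⟩ := exists_abs_integral_div_dist_rpow_le volume (β := β) (γ := γ)
    (by rwa [hdim]) (by rwa [hdim]) (by rw [hdim]; linarith)
  exact ⟨C, fun M f _ hf x => hdim ▸ hC M f hf x⟩
end
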